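/- Let (κ,ρ) ∈ W. The map s : (0,∞) → (0,∞) is a bijection, and its inverse satisfies s^{−1}(x) = 1/s(1/x) for every x ∈ (0,∞). -/

import Mathlib

open Real Filter Set

noncomputable section

/-- `φ₀(κ,ρ,β)`. -/
def phi0 (κ ρ β : ℝ) : ℝ :=
  β * ((1 - κ) * β ^ (2 * ρ) + 2 * (1 + κ * ρ) * β ^ ρ + 1 + κ)
    / ((1 - κ) * β ^ (2 * ρ) + 2 * (1 - κ * ρ) * β ^ ρ + 1 + κ)

/-- `φ₁(κ,ρ,β)`. -/
def phi1 (κ ρ β : ℝ) : ℝ :=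
  β * ((1 + κ) * β ^ (2 * ρ) + 2 * (1 - κ * ρ) * β ^ ρ + 1 - κ)
    / ((1 + κ) * β ^ (2 * ρ) + 2 * (1 + κ * ρ) * β ^ ρ + 1 - κ)


/-!
Writing `ι x = x⁻¹`, the identity `φ₁(β) = 1 / φ₀(1/β)` says `s ∘ φ₀ = ι ∘ φ₀ ∘ ι` on `(0, ∞)`.
Since `φ₀` extends continuously by `φ₀(0) = 0`, satisfies `φ₀(β) ≥ β` and has a positive derivative,
it is an increasing bijection of `(0, ∞)`; hence `s = ι ∘ φ₀ ∘ ι ∘ φ₀⁻¹` is a bijection, and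
`s ∘ ι ∘ s ∘ ι = id`.
-/

section InvConj

variable {α : Type*} [InvolutiveInv α] {t : Set α} {f s : α → α}

lemma bijOn_of_apply_eq_inv_apply_inv (ht : ∀ x ∈ t, x⁻¹ ∈ t) (hf : BijOn f t t)
    (hs : ∀ β ∈ t, s (f β) = (f β⁻¹)⁻¹) : BijOn s t t := by
  refine ⟨?_, ?_, ?_⟩
  · rintro x hx
    obtain ⟨β, hβ, rfl⟩ := hf.surjOn hx
    rw [hs β hβ]
    exact ht _ (hf.mapsTo (ht β hβ))
  · rintro x hx y hy hxy
    obtain ⟨β, hβ, rfl⟩ := hf.surjOn hx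
    obtain ⟨γ, hγ, rfl⟩ := hf.surjOn hy
    rw [hs β hβ, hs γ hγ, inv_inj] at hxy
    rw [inv_injective (hf.injOn (ht β hβ) (ht γ hγ) hxy)]
  · rintro y hy
    obtain ⟨γ, hγ, hγy⟩ := hf.surjOn (ht y hy)
    exact ⟨f γ⁻¹, hf.mapsTo (ht γ hγ), by rw [hs _ (ht γ hγ), inv_inv, hγy, inv_inv]⟩

lemma rightInvOn_inv_conj_of_apply_eq_inv_apply_inv (ht : ∀ x ∈ t, x⁻¹ ∈ t)
    (hf : SurjOn f t t) (hs : ∀ β ∈ t, s (f β) = (f β⁻¹)⁻¹) :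
    RightInvOn (fun x ↦ (s x⁻¹)⁻¹) s t := by
  intro x hx
  obtain ⟨γ, hγ, hγx⟩ := hf (ht x hx)
  show s (s x⁻¹)⁻¹ = x
  rw [← hγx, hs γ hγ, inv_inv, hs _ (ht γ hγ), inv_inv, hγx, inv_inv]

end InvConj

section Phi

variable {κ ρ β : ℝ}

def phi0Den (κ ρ t : ℝ) : ℝ := (1 - κ) * t ^ 2 + 2 * (1 - κ * ρ) * t + 1 + κ

/-- `N D + ρ t (N' D - N D')` for `N, D` the numerator and denominator of `φ₀` as quadratics in
`t = β ^ ρ`: the numerator of `φ₀'(β)`; all its coefficients are nonnegative on `W`. -/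
def phi0DerivNum (κ ρ t : ℝ) : ℝ :=
  (1 - κ) ^ 2 * t ^ 4 + 4 * (1 - κ) * (1 - κ * ρ ^ 2) * t ^ 3
    + (2 * (1 - κ) * (1 + κ) + 4 * (1 - (κ * ρ) ^ 2)) * t ^ 2
    + 4 * (1 + κ) * (1 + κ * ρ ^ 2) * t + (1 + κ) ^ 2

lemma mul_le_one_of_sq_mul_le_one (hκ₀ : 0 ≤ κ) (hκ₁ : κ ≤ 1) (hW : ρ ^ 2 * κ ≤ 1) :
    κ * ρ ≤ 1 := by
  nlinarith [sq_nonneg (κ * ρ - 1)]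

lemma phi0Den_pos (hκ₀ : 0 ≤ κ) (hκ₁ : κ ≤ 1) (hκρ : κ * ρ ≤ 1) {t : ℝ} (ht : 0 ≤ t) :
    0 < phi0Den κ ρ t := by
  unfold phi0Den
  nlinarith [mul_nonneg (sub_nonneg.2 hκ₁) (sq_nonneg t), mul_nonneg (sub_nonneg.2 hκρ) ht]

lemma phi0DerivNum_pos (hκ₀ : 0 ≤ κ) (hκ₁ : κ ≤ 1) (hW : ρ ^ 2 * κ ≤ 1) {t : ℝ} (ht : 0 ≤ t) :
    0 < phi0DerivNum κ ρ t := by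
  have h₁ : 0 ≤ 1 - κ := by linarith
  have h₂ : 0 ≤ 1 - κ * ρ ^ 2 := by linarith
  have h₃ : 0 ≤ 1 - (κ * ρ) ^ 2 := by nlinarith
  have h₄ : 0 ≤ 1 + κ * ρ ^ 2 := by positivity
  unfold phi0DerivNum
  nlinarith [sq_nonneg ((1 - κ) * t ^ 2), mul_nonneg (mul_nonneg h₁ h₂) (pow_nonneg ht 3),
    mul_nonneg (mul_nonneg h₁ (by linarith : (0 : ℝ) ≤ 1 + κ)) (sq_nonneg t),
    mul_nonneg h₃ (sq_nonneg t), mul_nonneg (mul_nonneg (by linarith : (0 : ℝ) ≤ 1 + κ) h₄) ht]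

lemma rpow_two_mul_eq_sq (hβ : 0 ≤ β) : β ^ (2 * ρ) = (β ^ ρ) ^ 2 := by
  rw [mul_comm 2 ρ, Real.rpow_mul hβ, Real.rpow_two]

lemma phi0_eq (hβ : 0 ≤ β) :
    phi0 κ ρ β = β * (phi0Den κ ρ (β ^ ρ) + 4 * κ * ρ * β ^ ρ) / phi0Den κ ρ (β ^ ρ) := by
  rw [phi0, phi0Den, rpow_two_mul_eq_sq hβ]
  ring_nf

lemma phi0_zero : phi0 κ ρ 0 = 0 := by simp [phi0]

lemma le_phi0 (hκ₀ : 0 ≤ κ) (hκ₁ : κ ≤ 1) (hρ : 0 ≤ ρ) (hW : ρ ^ 2 * κ ≤ 1) (hβ : 0 ≤ β) :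
    β ≤ phi0 κ ρ β := by
  have hD := phi0Den_pos hκ₀ hκ₁ (mul_le_one_of_sq_mul_le_one hκ₀ hκ₁ hW) (rpow_nonneg hβ ρ)
  rw [phi0_eq hβ, le_div_iff₀ hD]
  have := mul_nonneg (mul_nonneg (mul_nonneg hβ hκ₀) hρ) (rpow_nonneg hβ ρ)
  nlinarith

lemma continuousOn_phi0 (hκ₀ : 0 ≤ κ) (hκ₁ : κ ≤ 1) (hρ : 0 ≤ ρ) (hW : ρ ^ 2 * κ ≤ 1) :
    ContinuousOn (phi0 κ ρ) (Ici 0) := by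
  have hκρ := mul_le_one_of_sq_mul_le_one hκ₀ hκ₁ hW
  have hcont := Real.continuous_rpow_const hρ
  refine ContinuousOn.congr (f := fun β ↦
    β * (phi0Den κ ρ (β ^ ρ) + 4 * κ * ρ * β ^ ρ) / phi0Den κ ρ (β ^ ρ)) ?_
    (fun β hβ ↦ phi0_eq hβ)
  refine ContinuousOn.div (by unfold phi0Den; fun_prop) (by unfold phi0Den; fun_prop) ?_
  exact fun β hβ ↦ (phi0Den_pos hκ₀ hκ₁ hκρ (rpow_nonneg hβ ρ)).ne'

lemma hasDerivAt_phi0 (hβ : 0 < β) (hD : phi0Den κ ρ (β ^ ρ) ≠ 0) :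
    HasDerivAt (phi0 κ ρ) (phi0DerivNum κ ρ (β ^ ρ) / phi0Den κ ρ (β ^ ρ) ^ 2) β := by
  have h₁ : HasDerivAt (fun x ↦ x ^ ρ) (ρ * β ^ (ρ - 1)) β :=
    hasDerivAt_rpow_const (Or.inl hβ.ne')
  have h₂ : HasDerivAt (fun x ↦ x ^ (2 * ρ)) (2 * ρ * β ^ (2 * ρ - 1)) β :=
    hasDerivAt_rpow_const (Or.inl hβ.ne')
  have hnum := (hasDerivAt_id β).mul
    ((((h₂.const_mul (1 - κ)).add (h₁.const_mul (2 * (1 + κ * ρ)))).add_const 1).add_const κ)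
  have hden :=
    (((h₂.const_mul (1 - κ)).add (h₁.const_mul (2 * (1 - κ * ρ)))).add_const 1).add_const κ
  have hD' : (1 - κ) * β ^ (2 * ρ) + 2 * (1 - κ * ρ) * β ^ ρ + 1 + κ ≠ 0 := by
    rwa [rpow_two_mul_eq_sq hβ.le]
  refine (hnum.div hden hD').congr_deriv ?_
  simp only [Pi.add_apply, Pi.mul_apply, id, phi0DerivNum, phi0Den] at hD ⊢
  rw [Real.rpow_sub hβ, Real.rpow_sub hβ, Real.rpow_one, rpow_two_mul_eq_sq hβ.le]
  field_simp
  ring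

lemma strictMonoOn_phi0 (hκ₀ : 0 ≤ κ) (hκ₁ : κ ≤ 1) (hρ : 0 ≤ ρ) (hW : ρ ^ 2 * κ ≤ 1) :
    StrictMonoOn (phi0 κ ρ) (Ioi 0) := by
  refine strictMonoOn_of_deriv_pos (convex_Ioi 0)
    ((continuousOn_phi0 hκ₀ hκ₁ hρ hW).mono Ioi_subset_Ici_self) fun β hβ ↦ ?_
  rw [interior_Ioi] at hβ
  have ht : 0 ≤ β ^ ρ := rpow_nonneg hβ.le ρ
  have hD := phi0Den_pos hκ₀ hκ₁ (mul_le_one_of_sq_mul_le_one hκ₀ hκ₁ hW) ht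
  rw [(hasDerivAt_phi0 hβ hD.ne').deriv]
  exact div_pos (phi0DerivNum_pos hκ₀ hκ₁ hW ht) (pow_pos hD 2)

lemma bijOn_phi0 (hκ₀ : 0 ≤ κ) (hκ₁ : κ ≤ 1) (hρ : 0 ≤ ρ) (hW : ρ ^ 2 * κ ≤ 1) :
    BijOn (phi0 κ ρ) (Ioi 0) (Ioi 0) := by
  refine ⟨fun β hβ ↦ lt_of_lt_of_le hβ (le_phi0 hκ₀ hκ₁ hρ hW (le_of_lt hβ)),
    (strictMonoOn_phi0 hκ₀ hκ₁ hρ hW).injOn, fun y hy ↦ ?_⟩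
  have hy : 0 < y := hy
  obtain ⟨β, hβ, hβy⟩ := intermediate_value_Icc hy.le
    ((continuousOn_phi0 hκ₀ hκ₁ hρ hW).mono Icc_subset_Ici_self)
    ⟨phi0_zero.trans_le hy.le, le_phi0 hκ₀ hκ₁ hρ hW hy.le⟩
  refine ⟨β, lt_of_le_of_ne hβ.1 ?_, hβy⟩
  rintro rfl
  exact hy.ne (phi0_zero.symm.trans hβy)

lemma phi1_eq_inv_phi0_inv (hβ : 0 < β) : phi1 κ ρ β = (phi0 κ ρ β⁻¹)⁻¹ := by
  have ht : β ^ ρ ≠ 0 := (rpow_pos_of_pos hβ ρ).ne'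
  rw [phi1, phi0, Real.inv_rpow hβ.le, Real.inv_rpow hβ.le, rpow_two_mul_eq_sq hβ.le]
  set t := β ^ ρ
  have hnum : (1 + κ) * t ^ 2 + 2 * (1 - κ * ρ) * t + 1 - κ
      = t ^ 2 * ((1 - κ) * (t ^ 2)⁻¹ + 2 * (1 - κ * ρ) * t⁻¹ + 1 + κ) := by
    field_simp; ring
  have hden : (1 + κ) * t ^ 2 + 2 * (1 + κ * ρ) * t + 1 - κ
      = t ^ 2 * ((1 - κ) * (t ^ 2)⁻¹ + 2 * (1 + κ * ρ) * t⁻¹ + 1 + κ) := by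
    field_simp; ring
  rw [hnum, hden, mul_left_comm, mul_div_mul_left _ _ (pow_ne_zero 2 ht)]
  generalize (1 - κ) * (t ^ 2)⁻¹ + 2 * (1 - κ * ρ) * t⁻¹ + 1 + κ = D
  generalize (1 - κ) * (t ^ 2)⁻¹ + 2 * (1 + κ * ρ) * t⁻¹ + 1 + κ = N
  simp only [div_eq_mul_inv, mul_inv, inv_inv]
  ring

end Phi

theorem stmt14 (κ ρ : ℝ) (hκ : κ ∈ Set.Ioc (0:ℝ) 1) (hρ : 0 < ρ) (hW : ρ ^ 2 * κ ≤ 1)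
    (s : ℝ → ℝ) (hs : ∀ β : ℝ, 0 < β → s (phi0 κ ρ β) = phi1 κ ρ β) :
    Set.BijOn s (Set.Ioi 0) (Set.Ioi 0) ∧
    -- the inverse of `s` satisfies `s⁻¹(x) = 1/s(1/x)`:
    ∀ x : ℝ, 0 < x → s (s x⁻¹)⁻¹ = x := by
  have hinv : ∀ x ∈ Ioi (0 : ℝ), x⁻¹ ∈ Ioi 0 := fun _ hx ↦ inv_pos.2 (mem_Ioi.1 hx)
  have hφ := bijOn_phi0 hκ.1.le hκ.2 hρ.le hW
  have hs' : ∀ β ∈ Ioi (0 : ℝ), s (phi0 κ ρ β) = (phi0 κ ρ β⁻¹)⁻¹ :=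
    fun β hβ ↦ (hs β hβ).trans (phi1_eq_inv_phi0_inv hβ)
  exact ⟨bijOn_of_apply_eq_inv_apply_inv hinv hφ hs',
    fun x hx ↦ rightInvOn_inv_conj_of_apply_eq_inv_apply_inv hinv hφ.surjOn hs' hx⟩
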